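/- Let $a_1, a_2 < 0$ with $a_1 + a_2 = -n/2$, and let $V(\nu_1, \nu_2) = \langle \nu_1 + \nu_2 \rangle^{a_1} \langle \nu_2 \rangle^{a_2}$ on $\mathbb{Z}^n \times \mathbb{Z}^n$. Then there is $C > 0$ such that for all nonnegative $A_1, A_2$ on $\mathbb{Z}^n$, $\left\| \sum_{\nu_1 + \nu_2 = \mu} V(\nu_1,\nu_2) A_1(\nu_1) A_2(\nu_2) \right\|_{\ell^2_\mu(\mathbb{Z}^n)} \le C \|A_1\|_{\ell^2(\mathbb{Z}^n)} \|A_2\|_{\ell^2(\mathbb{Z}^n)}$. -/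

import Mathlib

open scoped ENNReal

/-- The Japanese-bracket weight `⟨ν⟩^a = (1+|ν|²)^(a/2)` for `ν ∈ ℤⁿ`, as an `ℝ≥0∞`. -/
noncomputable def jweight (n : ℕ) (a : ℝ) (ν : Fin n → ℤ) : ℝ≥0∞ :=
  ENNReal.ofReal ((1 + ∑ i, ((ν i : ℝ)) ^ 2) ^ (a / 2))

/-!
Put `η = μ - ν` and split the kernel `⟨μ⟩^a₁ ⟨η⟩^a₂` according to whether `⟨η⟩ ≤ ⟨μ⟩` or
`⟨μ⟩ ≤ ⟨η⟩`. On the first region, Cauchy–Schwarz in `ν` against `A₁(ν) A₂(μ - ν)` works because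
`∑_{⟨η⟩ ≤ ⟨μ⟩} ⟨μ⟩^(2a₁) ⟨η⟩^(2a₂)` is bounded uniformly in `μ`; on the second, Cauchy–Schwarz
against `A₁` alone works because `∑_{⟨μ⟩ ≤ ⟨η⟩} ⟨μ⟩^(2a₁) ⟨η⟩^(2a₂)` is bounded uniformly in `η`.
Both uniform bounds are the lattice estimate `∑_{⟨μ⟩ ≤ R} ⟨μ⟩^s ≲ R^(n+s)` for `-n < s ≤ 0`
combined with `2a₁ + 2a₂ + n = 0`. The lattice estimate follows from `∏ᵢ ⟨μᵢ⟩ ≤ ⟨μ⟩^n`, which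
reduces it to the one-dimensional bound `∑_{k ≤ N} k^(-p) ≤ N^(1-p) / (1-p)` for `0 ≤ p < 1`.
-/

open Finset
open scoped NNReal

theorem ENNReal.add_sq_le_two_mul (x y : ℝ≥0∞) : (x + y) ^ 2 ≤ 2 * (x ^ 2 + y ^ 2) := by
  induction x using ENNReal.recTopCoe with
  | top => simp
  | coe x =>
    induction y using ENNReal.recTopCoe with
    | top => simp
    | coe y => exact_mod_cast add_sq_le (a := x) (b := y)

theorem ENNReal.tsum_mul_sq_le_sq_mul_sq {α : Type*} (f g : α → ℝ≥0∞) :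
    (∑' x, f x * g x) ^ 2 ≤ (∑' x, f x ^ 2) * ∑' x, g x ^ 2 := by
  let _ : MeasurableSpace α := ⊤
  have hmeas (h : α → ℝ≥0∞) : AEMeasurable h MeasureTheory.Measure.count :=
    (measurable_from_top (f := h)).aemeasurable
  have holder := ENNReal.lintegral_mul_le_Lp_mul_Lq MeasureTheory.Measure.count
    Real.HolderConjugate.two_two (hmeas f) (hmeas g)
  simp only [MeasureTheory.lintegral_count, Pi.mul_apply, ENNReal.rpow_two] at holder
  calc (∑' x, f x * g x) ^ 2
      ≤ ((∑' x, f x ^ 2) ^ (1 / 2 : ℝ) * (∑' x, g x ^ 2) ^ (1 / 2 : ℝ)) ^ 2 := by gcongr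
    _ = (∑' x, f x ^ 2) * ∑' x, g x ^ 2 := by
      rw [mul_pow, ← ENNReal.rpow_two, ← ENNReal.rpow_two, ← ENNReal.rpow_mul,
        ← ENNReal.rpow_mul]
      norm_num

section WeightedConvolution

variable {G : Type*} [AddCommGroup G]

noncomputable def weightedConv (w : G → G → ℝ≥0∞) (A₁ A₂ : G → ℝ≥0∞) (μ : G) : ℝ≥0∞ :=
  ∑' ν, w μ (μ - ν) * A₁ ν * A₂ (μ - ν)

theorem tsum_sub_left {M : Type*} [AddCommMonoid M] [TopologicalSpace M] (f : G → M) (μ : G) :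
    ∑' ν, f (μ - ν) = ∑' η, f η :=
  (Equiv.subLeft μ).tsum_eq f

theorem tsum_sub_right {M : Type*} [AddCommMonoid M] [TopologicalSpace M] (f : G → M) (ν : G) :
    ∑' μ, f (μ - ν) = ∑' η, f η :=
  (Equiv.subRight ν).tsum_eq f

theorem ENNReal.tsum_tsum_mul_sub (f g : G → ℝ≥0∞) :
    ∑' μ, ∑' ν, f ν * g (μ - ν) = (∑' ν, f ν) * ∑' η, g η := by
  rw [ENNReal.tsum_comm, ← ENNReal.tsum_mul_right]
  refine tsum_congr fun ν ↦ ?_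
  rw [ENNReal.tsum_mul_left, tsum_sub_right g ν]

theorem tsum_weightedConv_sq_le_of_row {u : G → G → ℝ≥0∞} {C : ℝ≥0∞}
    (hu : ∀ μ, ∑' η, u μ η ^ 2 ≤ C) (A₁ A₂ : G → ℝ≥0∞) :
    ∑' μ, weightedConv u A₁ A₂ μ ^ 2 ≤ C * (∑' ν, A₁ ν ^ 2) * ∑' η, A₂ η ^ 2 := by
  have hpt (μ : G) : weightedConv u A₁ A₂ μ ^ 2 ≤ C * ∑' ν, A₁ ν ^ 2 * A₂ (μ - ν) ^ 2 :=
    calc weightedConv u A₁ A₂ μ ^ 2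
        ≤ (∑' ν, u μ (μ - ν) ^ 2) * ∑' ν, (A₁ ν * A₂ (μ - ν)) ^ 2 := by
          simpa only [weightedConv, mul_assoc] using ENNReal.tsum_mul_sq_le_sq_mul_sq
            (fun ν ↦ u μ (μ - ν)) (fun ν ↦ A₁ ν * A₂ (μ - ν))
      _ ≤ C * ∑' ν, A₁ ν ^ 2 * A₂ (μ - ν) ^ 2 := by
          rw [tsum_sub_left (u μ · ^ 2) μ]
          simp_rw [mul_pow]
          gcongr
          exact hu μ
  calc ∑' μ, weightedConv u A₁ A₂ μ ^ 2
      ≤ ∑' μ, C * ∑' ν, A₁ ν ^ 2 * A₂ (μ - ν) ^ 2 := ENNReal.tsum_le_tsum hpt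
    _ = C * (∑' ν, A₁ ν ^ 2) * ∑' η, A₂ η ^ 2 := by
        rw [ENNReal.tsum_mul_left, ENNReal.tsum_tsum_mul_sub (A₁ · ^ 2) (A₂ · ^ 2), mul_assoc]

theorem tsum_weightedConv_sq_le_of_col {v : G → G → ℝ≥0∞} {C : ℝ≥0∞}
    (hv : ∀ η, ∑' μ, v μ η ^ 2 ≤ C) (A₁ A₂ : G → ℝ≥0∞) :
    ∑' μ, weightedConv v A₁ A₂ μ ^ 2 ≤ C * (∑' ν, A₁ ν ^ 2) * ∑' η, A₂ η ^ 2 := by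
  have hpt (μ : G) :
      weightedConv v A₁ A₂ μ ^ 2 ≤ (∑' ν, A₁ ν ^ 2) * ∑' η, v μ η ^ 2 * A₂ η ^ 2 :=
    calc weightedConv v A₁ A₂ μ ^ 2
        = (∑' ν, A₁ ν * (v μ (μ - ν) * A₂ (μ - ν))) ^ 2 := by
          simp_rw [weightedConv, mul_left_comm (A₁ _), mul_assoc]
      _ ≤ (∑' ν, A₁ ν ^ 2) * ∑' ν, (v μ (μ - ν) * A₂ (μ - ν)) ^ 2 :=
          ENNReal.tsum_mul_sq_le_sq_mul_sq _ _
      _ = (∑' ν, A₁ ν ^ 2) * ∑' η, v μ η ^ 2 * A₂ η ^ 2 := by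
          rw [tsum_sub_left (fun η ↦ (v μ η * A₂ η) ^ 2) μ]
          simp_rw [mul_pow]
  calc ∑' μ, weightedConv v A₁ A₂ μ ^ 2
      ≤ ∑' μ, (∑' ν, A₁ ν ^ 2) * ∑' η, v μ η ^ 2 * A₂ η ^ 2 := ENNReal.tsum_le_tsum hpt
    _ = (∑' ν, A₁ ν ^ 2) * ∑' η, (∑' μ, v μ η ^ 2) * A₂ η ^ 2 := by
        rw [ENNReal.tsum_mul_left, ENNReal.tsum_comm]
        simp_rw [ENNReal.tsum_mul_right]
    _ ≤ (∑' ν, A₁ ν ^ 2) * ∑' η, C * A₂ η ^ 2 := by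
        gcongr with η
        exact hv η
    _ = C * (∑' ν, A₁ ν ^ 2) * ∑' η, A₂ η ^ 2 := by
        rw [ENNReal.tsum_mul_left, mul_left_comm, mul_assoc]

theorem tsum_weightedConv_sq_le_of_le_add {w u v : G → G → ℝ≥0∞} {C₁ C₂ : ℝ≥0∞}
    (hw : ∀ μ η, w μ η ≤ u μ η + v μ η) (hu : ∀ μ, ∑' η, u μ η ^ 2 ≤ C₁)
    (hv : ∀ η, ∑' μ, v μ η ^ 2 ≤ C₂) (A₁ A₂ : G → ℝ≥0∞) :
    ∑' μ, weightedConv w A₁ A₂ μ ^ 2 ≤ 2 * (C₁ + C₂) * (∑' ν, A₁ ν ^ 2) * ∑' η, A₂ η ^ 2 := by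
  have hpt (μ : G) :
      weightedConv w A₁ A₂ μ ≤ weightedConv u A₁ A₂ μ + weightedConv v A₁ A₂ μ := by
    rw [weightedConv, weightedConv, weightedConv, ← ENNReal.tsum_add]
    gcongr with ν
    rw [← add_mul, ← add_mul]
    gcongr
    exact hw μ (μ - ν)
  calc ∑' μ, weightedConv w A₁ A₂ μ ^ 2
      ≤ ∑' μ, 2 * (weightedConv u A₁ A₂ μ ^ 2 + weightedConv v A₁ A₂ μ ^ 2) :=
        ENNReal.tsum_le_tsum fun μ ↦
          (pow_le_pow_left' (hpt μ) 2).trans (ENNReal.add_sq_le_two_mul _ _)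
    _ ≤ 2 * (C₁ * (∑' ν, A₁ ν ^ 2) * (∑' η, A₂ η ^ 2)
          + C₂ * (∑' ν, A₁ ν ^ 2) * ∑' η, A₂ η ^ 2) := by
        rw [ENNReal.tsum_mul_left, ENNReal.tsum_add]
        gcongr
        · exact tsum_weightedConv_sq_le_of_row hu A₁ A₂
        · exact tsum_weightedConv_sq_le_of_col hv A₁ A₂
    _ = 2 * (C₁ + C₂) * (∑' ν, A₁ ν ^ 2) * ∑' η, A₂ η ^ 2 := by ring

end WeightedConvolution

theorem Real.rpow_neg_le_sub_rpow_div {p : ℝ} (hp0 : 0 ≤ p) (hp1 : p < 1) {x : ℝ} (hx : 1 ≤ x) :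
    x ^ (-p) ≤ (x ^ (1 - p) - (x - 1) ^ (1 - p)) / (1 - p) := by
  have hx0 : 0 < x := by linarith
  have hq : 0 < 1 - p := by linarith
  -- Bernoulli's inequality for the concave power `t ↦ t ^ (1 - p)`, at `t = 1 - 1/x`
  have bernoulli := rpow_one_add_le_one_add_mul_self (s := -x⁻¹)
    (by simpa using inv_le_one_of_one_le₀ hx) hq.le (by linarith)
  have hsplit : 1 + -x⁻¹ = (x - 1) / x := by field_simp; ring
  rw [hsplit, Real.div_rpow (by linarith) hx0.le, div_le_iff₀ (by positivity)] at bernoulli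
  have hneg : x ^ (-p) = x ^ (1 - p) / x := by
    rw [← Real.rpow_sub_one hx0.ne']; ring_nf
  have hexpand : (1 + (1 - p) * -x⁻¹) * x ^ (1 - p) = x ^ (1 - p) - x ^ (1 - p) / x * (1 - p) := by
    ring
  rw [le_div_iff₀ hq, hneg]
  linarith

theorem Real.sum_range_add_one_rpow_neg_le {p : ℝ} (hp0 : 0 ≤ p) (hp1 : p < 1) (N : ℕ) :
    ∑ k ∈ range N, ((k : ℝ) + 1) ^ (-p) ≤ (N : ℝ) ^ (1 - p) / (1 - p) := by
  calc ∑ k ∈ range N, ((k : ℝ) + 1) ^ (-p)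
      ≤ ∑ k ∈ range N, (((k + 1 : ℕ) : ℝ) ^ (1 - p) - (k : ℝ) ^ (1 - p)) / (1 - p) := by
        gcongr with k
        simpa using Real.rpow_neg_le_sub_rpow_div hp0 hp1 (x := (k : ℝ) + 1) (by simp)
    _ = (N : ℝ) ^ (1 - p) / (1 - p) := by
        rw [← sum_div, sum_range_sub (fun k : ℕ ↦ (k : ℝ) ^ (1 - p))]
        simp [Real.zero_rpow (by linarith : 1 - p ≠ 0)]

theorem Int.sum_Icc_natAbs_le {R : Type*} [CommSemiring R] [PartialOrder R] [IsOrderedRing R]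
    {f : ℕ → R} (hf : ∀ k, 0 ≤ f k) (M : ℕ) :
    ∑ m ∈ Icc (-(M : ℤ)) M, f m.natAbs ≤ 2 * ∑ k ∈ Finset.range (M + 1), f k := by
  classical
  have hfiber (k : ℕ) : #{m ∈ Icc (-(M : ℤ)) M | m.natAbs = k} ≤ 2 := by
    calc #{m ∈ Icc (-(M : ℤ)) M | m.natAbs = k} ≤ #({(k : ℤ), -(k : ℤ)} : Finset ℤ) := by
          refine card_le_card fun m hm ↦ ?_
          simp only [mem_filter] at hm
          simp only [mem_insert, mem_singleton]
          omega
      _ ≤ 2 := card_le_two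
  have himage : (Icc (-(M : ℤ)) M).image Int.natAbs ⊆ Finset.range (M + 1) := by
    intro k hk
    simp only [mem_image, mem_Icc] at hk
    obtain ⟨m, ⟨hm₁, hm₂⟩, rfl⟩ := hk
    rw [mem_range]
    omega
  rw [sum_comp, mul_sum]
  calc ∑ k ∈ (Icc (-(M : ℤ)) M).image Int.natAbs, #{m ∈ Icc (-(M : ℤ)) M | m.natAbs = k} • f k
      ≤ ∑ k ∈ (Icc (-(M : ℤ)) M).image Int.natAbs, 2 * f k := by
        gcongr with k
        rw [nsmul_eq_mul]
        exact mul_le_mul_of_nonneg_right ((Nat.mono_cast (hfiber k)).trans_eq Nat.cast_ofNat) (hf k)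
    _ ≤ ∑ k ∈ Finset.range (M + 1), 2 * f k :=
        sum_le_sum_of_subset_of_nonneg himage fun k _ _ ↦ mul_nonneg zero_le_two (hf k)

theorem one_add_sq_rpow_neg_le {p : ℝ} (hp0 : 0 ≤ p) (hp1 : p ≤ 1) (m : ℤ) :
    (1 + (m : ℝ) ^ 2) ^ (-p / 2) ≤ 2 * ((m.natAbs : ℝ) + 1) ^ (-p) := by
  set y : ℝ := ((m.natAbs : ℝ) + 1) / 2
  have hy : 0 < y := by positivity
  have hy_sq : y ^ 2 ≤ 1 + (m : ℝ) ^ 2 := by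
    have : (m.natAbs : ℝ) ^ 2 = (m : ℝ) ^ 2 := by simp [Nat.cast_natAbs, sq_abs]
    rw [div_pow]
    nlinarith [sq_nonneg ((m.natAbs : ℝ) - 1)]
  calc (1 + (m : ℝ) ^ 2) ^ (-p / 2) ≤ (y ^ 2) ^ (-p / 2) :=
        Real.rpow_le_rpow_of_nonpos (by positivity) hy_sq (by linarith)
    _ = ((m.natAbs : ℝ) + 1) ^ (-p) * 2 ^ p := by
        rw [← Real.rpow_natCast, ← Real.rpow_mul hy.le, show ((2 : ℕ) : ℝ) * (-p / 2) = -p by ring,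
          Real.div_rpow (by positivity) zero_le_two, Real.rpow_neg zero_le_two, div_inv_eq_mul]
    _ ≤ 2 * ((m.natAbs : ℝ) + 1) ^ (-p) := by
        rw [mul_comm]
        gcongr
        simpa using Real.rpow_le_rpow_of_exponent_le one_le_two hp1

theorem sum_Icc_one_add_sq_rpow_neg_le {p : ℝ} (hp0 : 0 ≤ p) (hp1 : p < 1) (M : ℕ) :
    ∑ m ∈ Icc (-(M : ℤ)) M, (1 + (m : ℝ) ^ 2) ^ (-p / 2)
      ≤ 4 / (1 - p) * ((M : ℝ) + 1) ^ (1 - p) := by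
  calc ∑ m ∈ Icc (-(M : ℤ)) M, (1 + (m : ℝ) ^ 2) ^ (-p / 2)
      ≤ ∑ m ∈ Icc (-(M : ℤ)) M, 2 * ((m.natAbs : ℝ) + 1) ^ (-p) :=
        sum_le_sum fun m _ ↦ one_add_sq_rpow_neg_le hp0 hp1.le m
    _ ≤ 2 * ∑ k ∈ range (M + 1), 2 * ((k : ℝ) + 1) ^ (-p) :=
        Int.sum_Icc_natAbs_le (f := fun k ↦ 2 * ((k : ℝ) + 1) ^ (-p)) (fun k ↦ by positivity) M
    _ ≤ 2 * (2 * (((M + 1 : ℕ) : ℝ) ^ (1 - p) / (1 - p))) := by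
        rw [← mul_sum]
        gcongr
        exact Real.sum_range_add_one_rpow_neg_le hp0 hp1 (M + 1)
    _ = 4 / (1 - p) * ((M : ℝ) + 1) ^ (1 - p) := by push_cast; ring

def bracketSq (n : ℕ) (ν : Fin n → ℤ) : ℝ := 1 + ∑ i, ((ν i : ℝ)) ^ 2

theorem one_add_sq_le_bracketSq {n : ℕ} (ν : Fin n → ℤ) (i : Fin n) :
    1 + (ν i : ℝ) ^ 2 ≤ bracketSq n ν := by
  unfold bracketSq
  gcongr
  exact single_le_sum (f := fun j ↦ ((ν j : ℝ)) ^ 2) (fun _ _ ↦ sq_nonneg _) (mem_univ i)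

theorem one_le_bracketSq {n : ℕ} (ν : Fin n → ℤ) : 1 ≤ bracketSq n ν :=
  le_add_of_nonneg_right (sum_nonneg fun _ _ ↦ sq_nonneg _)

theorem bracketSq_rpow_le_prod {n : ℕ} {s : ℝ} (hn : 0 < n) (hs : s ≤ 0) (ν : Fin n → ℤ) :
    bracketSq n ν ^ (s / 2) ≤ ∏ i, (1 + (ν i : ℝ) ^ 2) ^ (s / n / 2) := by
  have hprod : ∏ i, (1 + (ν i : ℝ) ^ 2) ≤ bracketSq n ν ^ n := by
    simpa using prod_le_prod (s := univ) (fun _ _ ↦ by positivity)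
      fun i _ ↦ one_add_sq_le_bracketSq ν i
  calc bracketSq n ν ^ (s / 2) = (bracketSq n ν ^ n) ^ (s / n / 2) := by
        rw [← Real.rpow_natCast, ← Real.rpow_mul (by linarith [one_le_bracketSq ν])]
        field_simp
    _ ≤ (∏ i, (1 + (ν i : ℝ) ^ 2)) ^ (s / n / 2) :=
        Real.rpow_le_rpow_of_nonpos (prod_pos fun _ _ ↦ by positivity) hprod
          (div_nonpos_of_nonpos_of_nonneg (div_nonpos_of_nonpos_of_nonneg hs n.cast_nonneg)
            zero_le_two)
    _ = ∏ i, (1 + (ν i : ℝ) ^ 2) ^ (s / n / 2) :=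
        (Real.finsetProd_rpow _ _ (fun _ _ ↦ by positivity) _).symm

theorem sum_piFinset_bracketSq_rpow_le {n : ℕ} {s : ℝ} (hs : -(n : ℝ) < s) (hs0 : s ≤ 0) (M : ℕ) :
    ∑ μ ∈ Fintype.piFinset (fun _ : Fin n ↦ Icc (-(M : ℤ)) M), bracketSq n μ ^ (s / 2)
      ≤ (4 / (1 + s / n)) ^ n * ((M : ℝ) + 1) ^ (n + s) := by
  have hn : (0 : ℝ) < n := by linarith
  set p := -(s / n) with hp
  have hp0 : 0 ≤ p := neg_nonneg.mpr (div_nonpos_of_nonpos_of_nonneg hs0 hn.le)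
  have hp1 : p < 1 := by rw [hp, neg_lt, lt_div_iff₀ hn]; linarith
  have hexp : s / n / 2 = -p / 2 := by rw [hp, neg_neg]
  calc ∑ μ ∈ Fintype.piFinset (fun _ : Fin n ↦ Icc (-(M : ℤ)) M), bracketSq n μ ^ (s / 2)
      ≤ ∑ μ ∈ Fintype.piFinset (fun _ : Fin n ↦ Icc (-(M : ℤ)) M),
          ∏ i, (1 + (μ i : ℝ) ^ 2) ^ (-p / 2) := by
        rw [← hexp]
        exact sum_le_sum fun μ _ ↦ bracketSq_rpow_le_prod (by exact_mod_cast hn) hs0 μ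
    _ = (∑ m ∈ Icc (-(M : ℤ)) M, (1 + (m : ℝ) ^ 2) ^ (-p / 2)) ^ n := by
        rw [← Fin.prod_const, prod_univ_sum]
    _ ≤ (4 / (1 - p) * ((M : ℝ) + 1) ^ (1 - p)) ^ n := by
        gcongr
        exact sum_Icc_one_add_sq_rpow_neg_le hp0 hp1 M
    _ = (4 / (1 + s / n)) ^ n * ((M : ℝ) + 1) ^ (n + s) := by
        rw [mul_pow, ← Real.rpow_natCast (_ ^ _), ← Real.rpow_mul (by positivity), hp]
        congr 2
        · ring
        · field_simp
          ring

theorem mem_piFinset_of_bracketSq_le {n : ℕ} {μ : Fin n → ℤ} {R : ℝ} (h : bracketSq n μ ≤ R) :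
    μ ∈ Fintype.piFinset (fun _ : Fin n ↦ Icc (-(⌊√R⌋₊ : ℤ)) ⌊√R⌋₊) := by
  rw [Fintype.mem_piFinset]
  intro i
  have habs : |(μ i : ℝ)| ≤ √R := Real.abs_le_sqrt (by linarith [one_add_sq_le_bracketSq μ i])
  have hnat : (μ i).natAbs ≤ ⌊√R⌋₊ := Nat.le_floor (by rwa [Nat.cast_natAbs, Int.cast_abs])
  rw [mem_Icc]
  omega

theorem jweight_eq_ofReal (n : ℕ) (a : ℝ) (ν : Fin n → ℤ) :
    jweight n a ν = ENNReal.ofReal (bracketSq n ν ^ (a / 2)) := rfl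

theorem jweight_mul_jweight (n : ℕ) (a b : ℝ) (ν : Fin n → ℤ) :
    jweight n a ν * jweight n b ν = jweight n (a + b) ν := by
  have hpos : 0 < bracketSq n ν := by linarith [one_le_bracketSq ν]
  rw [jweight_eq_ofReal, jweight_eq_ofReal, jweight_eq_ofReal,
    ← ENNReal.ofReal_mul (Real.rpow_nonneg hpos.le _), ← Real.rpow_add hpos, add_div]

theorem jweight_sq (n : ℕ) (a : ℝ) (ν : Fin n → ℤ) : jweight n a ν ^ 2 = jweight n (2 * a) ν := by
  rw [sq, jweight_mul_jweight, two_mul]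

theorem jweight_zero (n : ℕ) (ν : Fin n → ℤ) : jweight n 0 ν = 1 := by
  simp [jweight_eq_ofReal]

theorem exists_tsum_ite_jweight_le {n : ℕ} {s : ℝ} (hs : -(n : ℝ) < s) (hs0 : s ≤ 0) :
    ∃ C : ℝ≥0, ∀ η : Fin n → ℤ,
      ∑' μ, (if bracketSq n μ ≤ bracketSq n η then jweight n s μ else 0)
        ≤ C * jweight n (n + s) η := by
  refine ⟨((4 / (1 + s / n)) ^ n * 2 ^ (n + s)).toNNReal, fun η ↦ ?_⟩
  set R := bracketSq n η
  set M := ⌊√R⌋₊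
  have hsupp : ∀ μ ∉ Fintype.piFinset (fun _ : Fin n ↦ Icc (-(M : ℤ)) M),
      (if bracketSq n μ ≤ R then jweight n s μ else 0) = 0 :=
    fun μ hμ ↦ if_neg fun h ↦ hμ (mem_piFinset_of_bracketSq_le h)
  have hR : 1 ≤ R := one_le_bracketSq η
  have hM : (M : ℝ) + 1 ≤ 2 * √R := by
    linarith [Nat.floor_le (Real.sqrt_nonneg R), Real.one_le_sqrt.mpr hR]
  have hconst : 0 ≤ (4 / (1 + s / n)) ^ n := by
    have : -1 < s / n := by rw [lt_div_iff₀ (by linarith)]; linarith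
    exact pow_nonneg (div_nonneg zero_le_four (by linarith)) n
  rw [tsum_eq_sum hsupp]
  calc ∑ μ ∈ Fintype.piFinset (fun _ : Fin n ↦ Icc (-(M : ℤ)) M),
        (if bracketSq n μ ≤ R then jweight n s μ else 0)
      ≤ ∑ μ ∈ Fintype.piFinset (fun _ : Fin n ↦ Icc (-(M : ℤ)) M), jweight n s μ :=
        sum_le_sum fun μ _ ↦ by split_ifs <;> simp
    _ = ENNReal.ofReal (∑ μ ∈ Fintype.piFinset (fun _ : Fin n ↦ Icc (-(M : ℤ)) M),
          bracketSq n μ ^ (s / 2)) :=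
        (ENNReal.ofReal_sum_of_nonneg fun μ _ ↦ by positivity).symm
    _ ≤ ENNReal.ofReal ((4 / (1 + s / n)) ^ n * (2 * √R) ^ (n + s)) := by
        refine ENNReal.ofReal_le_ofReal ((sum_piFinset_bracketSq_rpow_le hs hs0 M).trans ?_)
        gcongr
        linarith
    _ = _ := by
        rw [Real.mul_rpow zero_le_two (Real.sqrt_nonneg R), Real.sqrt_eq_rpow,
          ← Real.rpow_mul (by linarith), ← mul_assoc,
          ENNReal.ofReal_mul (mul_nonneg hconst (by positivity)), jweight_eq_ofReal, ENNReal.ofReal,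
          one_div_mul_eq_div]

theorem exists_tsum_ite_jweight_mul_jweight_le {n : ℕ} {a b : ℝ} (hb : -(n : ℝ) < b) (hb0 : b ≤ 0)
    (habn : a + n + b = 0) :
    ∃ C : ℝ≥0, ∀ μ : Fin n → ℤ,
      ∑' η, (if bracketSq n η ≤ bracketSq n μ then jweight n a μ * jweight n b η else 0) ≤ C := by
  obtain ⟨C, hC⟩ := exists_tsum_ite_jweight_le hb hb0
  refine ⟨C, fun μ ↦ ?_⟩
  calc ∑' η, (if bracketSq n η ≤ bracketSq n μ then jweight n a μ * jweight n b η else 0)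
      = jweight n a μ * ∑' η, (if bracketSq n η ≤ bracketSq n μ then jweight n b η else 0) := by
        simp_rw [← ENNReal.tsum_mul_left, mul_ite, mul_zero]
    _ ≤ jweight n a μ * (C * jweight n (n + b) μ) := by gcongr; exact hC μ
    _ = C := by
        rw [mul_left_comm, jweight_mul_jweight, ← add_assoc, habn, jweight_zero, mul_one]

theorem stmt_10_general (n : ℕ) (a₁ a₂ : ℝ) (h₁ : a₁ < 0) (h₂ : a₂ < 0)
    (hsum : a₁ + a₂ = -(n : ℝ) / 2) :
    ∃ C : ℝ≥0∞, 0 < C ∧ C < ⊤ ∧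
      ∀ A₁ A₂ : (Fin n → ℤ) → ℝ≥0∞,
        (∑' μ : Fin n → ℤ,
            (∑' ν : Fin n → ℤ,
              jweight n a₁ (ν + (μ - ν)) * jweight n a₂ (μ - ν) * A₁ ν * A₂ (μ - ν)) ^ 2)
              ^ (1/2 : ℝ)
          ≤ C * (∑' ν, (A₁ ν) ^ 2) ^ (1/2 : ℝ) * (∑' ν, (A₂ ν) ^ 2) ^ (1/2 : ℝ) := by
  obtain ⟨C₁, hC₁⟩ := exists_tsum_ite_jweight_mul_jweight_le (n := n) (a := 2 * a₁) (b := 2 * a₂)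
    (by linarith) (by linarith) (by linarith)
  obtain ⟨C₂, hC₂⟩ := exists_tsum_ite_jweight_mul_jweight_le (n := n) (a := 2 * a₂) (b := 2 * a₁)
    (by linarith) (by linarith) (by linarith)
  set K : ℝ≥0 := 2 * (C₁ + C₂) + 1
  refine ⟨(K : ℝ≥0∞) ^ (1 / 2 : ℝ), ENNReal.rpow_pos (by positivity) ENNReal.coe_ne_top,
    ENNReal.rpow_lt_top_of_nonneg (by norm_num) ENNReal.coe_ne_top, fun A₁ A₂ ↦ ?_⟩
  have hbilinear := tsum_weightedConv_sq_le_of_le_add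
    (w := fun μ η ↦ jweight n a₁ μ * jweight n a₂ η)
    (u := fun μ η ↦ if bracketSq n η ≤ bracketSq n μ then jweight n a₁ μ * jweight n a₂ η else 0)
    (v := fun μ η ↦ if bracketSq n μ ≤ bracketSq n η then jweight n a₁ μ * jweight n a₂ η else 0)
    (fun μ η ↦ by rcases le_total (bracketSq n η) (bracketSq n μ) with h | h <;> simp [h])
    (fun μ ↦ by simpa [ite_pow, mul_pow, jweight_sq] using hC₁ μ)
    (fun η ↦ by simpa [ite_pow, mul_pow, jweight_sq, mul_comm] using hC₂ η) A₁ A₂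
  simp only [add_sub_cancel]
  calc _ ≤ ((K : ℝ≥0∞) * (∑' ν, A₁ ν ^ 2) * ∑' ν, A₂ ν ^ 2) ^ (1 / 2 : ℝ) := by
        gcongr
        refine hbilinear.trans ?_
        gcongr
        exact_mod_cast le_self_add
    _ = _ := by
        rw [ENNReal.mul_rpow_of_nonneg _ _ (by norm_num),
          ENNReal.mul_rpow_of_nonneg _ _ (by norm_num)]

theorem stmt_10 (n : ℕ) (hn : 1 ≤ n) (a₁ a₂ : ℝ) (h₁ : a₁ < 0) (h₂ : a₂ < 0)
    (hsum : a₁ + a₂ = -(n : ℝ) / 2) :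
    ∃ C : ℝ≥0∞, 0 < C ∧ C < ⊤ ∧
      ∀ A₁ A₂ : (Fin n → ℤ) → ℝ≥0∞,
        (∑' μ : Fin n → ℤ,
            (∑' ν : Fin n → ℤ,
              jweight n a₁ (ν + (μ - ν)) * jweight n a₂ (μ - ν) * A₁ ν * A₂ (μ - ν)) ^ 2)
              ^ (1/2 : ℝ)
          ≤ C * (∑' ν, (A₁ ν) ^ 2) ^ (1/2 : ℝ) * (∑' ν, (A₂ ν) ^ 2) ^ (1/2 : ℝ) :=
  stmt_10_general n a₁ a₂ h₁ h₂ hsum
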